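/- arXiv:hep-th/0110097 — 8 statements merged into one kernel-verified Lean document; each statement's English description precedes it below -/
import Mathlib

section
/- For every integer n ≥ 2, the derivative of g_n satisfies g_n'(x) = n·h_{n-2}(x). -/
open Polynomial

/-- The polynomial `g_n(x) = Σ_{k=0}^{⌊n/2⌋} (n/(n−k))·binom(n−k, k)·x^k` over ℚ
for `n ≥ 1`, with `g_0 = 2`. -/
noncomputable def gP (n : ℕ) : Polynomial ℚ :=
  if n = 0 then C 2
  else ∑ k ∈ Finset.range (n / 2 + 1),
    C ((n : ℚ) / ((n : ℚ) - (k : ℚ)) * (((n - k).choose k : ℕ) : ℚ)) * X ^ k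

/-- The polynomial `h_n(x) = Σ_{k=0}^{⌊n/2⌋} binom(n−k, k)·x^k` over ℚ. -/
noncomputable def hP (n : ℕ) : Polynomial ℚ :=
  ∑ k ∈ Finset.range (n / 2 + 1), C (((n - k).choose k : ℕ) : ℚ) * X ^ k

-- Beyond `⌊n/2⌋` the binomial `binom(n−k, k)` vanishes, so the truncated sums need no cut-off.
theorem coeff_hP (n k : ℕ) : (hP n).coeff k = ((n - k).choose k : ℚ) := by
  simp only [hP, finsetSum_coeff, coeff_C_mul_X_pow, Finset.sum_ite_eq, Finset.mem_range]
  split_ifs with hk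
  · rfl
  · rw [Nat.choose_eq_zero_of_lt (by omega), Nat.cast_zero]

theorem coeff_gP {n : ℕ} (hn : n ≠ 0) (k : ℕ) :
    (gP n).coeff k = n / (n - k) * ((n - k).choose k : ℚ) := by
  simp only [gP, if_neg hn, finsetSum_coeff, coeff_C_mul_X_pow, Finset.sum_ite_eq,
    Finset.mem_range]
  split_ifs with hk
  · rfl
  · rw [Nat.choose_eq_zero_of_lt (by omega), Nat.cast_zero, mul_zero]

theorem succ_mul_choose_sub_succ (n k : ℕ) :
    (k + 1) * (n - (k + 1)).choose (k + 1) = (n - (k + 1)) * (n - 2 - k).choose k := by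
  obtain h | h := le_or_gt n (k + 1)
  · simp [Nat.sub_eq_zero_of_le h]
  · obtain ⟨N, hN⟩ : ∃ N, n - (k + 1) = N + 1 := ⟨n - 2 - k, by omega⟩
    rw [hN, show n - 2 - k = N by omega, Nat.add_one_mul_choose_eq, mul_comm]

theorem g_derivative (n : ℕ) (hn : 2 ≤ n) :
    derivative (gP n) = C (n : ℚ) * hP (n - 2) := by
  ext m
  rw [coeff_derivative, coeff_gP (by omega), coeff_C_mul, coeff_hP]
  obtain hm | hm := lt_or_ge (m + 1) n
  · have key := congrArg (Nat.cast : ℕ → ℚ) (succ_mul_choose_sub_succ n m)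
    push_cast [Nat.cast_sub hm.le] at key ⊢
    have hden : (n : ℚ) - (m + 1) ≠ 0 := by
      rw [sub_ne_zero]; exact_mod_cast hm.ne'
    rw [mul_assoc, mul_comm _ ((m : ℚ) + 1), key, ← mul_assoc, div_mul_cancel₀ _ hden]
  · -- Both binomials vanish; this also covers the junk division by `n - (m + 1) = 0`.
    rw [Nat.choose_eq_zero_of_lt (by omega : n - (m + 1) < m + 1),
      Nat.choose_eq_zero_of_lt (by omega : n - 2 - m < m)]
    simp
end

section
/- For every integer n ≥ 2 and every x, one has g_{n+1}(x) − (2/(n+1))·x·g_{n+1}'(x) = g_n(x) − (1/n)·x·g_n'(x). -/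
open Polynomial

lemma gP_key (m : ℕ) (hm : 1 ≤ m) (c : ℚ) (x : ℚ) :
    (gP m).eval x - (c / m) * x * (derivative (gP m)).eval x
      = ∑ k ∈ Finset.range (m / 2 + 1),
          ((m : ℚ) / ((m : ℚ) - k) * (((m - k).choose k : ℕ) : ℚ)) * (1 - c * k / m) * x ^ k := by
  have hm0 : (m : ℚ) ≠ 0 := by positivity
  rw [gP, if_neg (by omega)]
  rw [derivative_sum]
  simp only [derivative_mul, derivative_C, zero_mul, zero_add, derivative_X_pow,
    eval_finset_sum, eval_mul, eval_pow, eval_C, eval_X, eval_natCast]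
  rw [Finset.mul_sum, ← Finset.sum_sub_distrib]
  refine Finset.sum_congr rfl fun k _ => ?_
  set a : ℚ := (m : ℚ) / ((m : ℚ) - k) * (((m - k).choose k : ℕ) : ℚ) with ha
  rcases k with _ | k
  · simp
  · push_cast
    field_simp
    ring

lemma gP_A (m : ℕ) (hm : 1 ≤ m) (x : ℚ) :
    (gP m).eval x - (1 / m) * x * (derivative (gP m)).eval x
      = ∑ k ∈ Finset.range (m / 2 + 1), (((m - k).choose k : ℕ) : ℚ) * x ^ k := by
  rw [gP_key m hm 1 x]
  refine Finset.sum_congr rfl fun k hk => ?_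
  rw [Finset.mem_range] at hk
  have hkm : k < m := by omega
  have hm0 : (m : ℚ) ≠ 0 := by positivity
  have hmk : (m : ℚ) - k ≠ 0 := by
    have : (k : ℚ) < m := by exact_mod_cast hkm
    intro h; linarith
  field_simp

lemma gP_B (m : ℕ) (hm : 2 ≤ m) (x : ℚ) :
    (gP m).eval x - (2 / m) * x * (derivative (gP m)).eval x
      = ∑ k ∈ Finset.range (m / 2 + 1), (((m - 1 - k).choose k : ℕ) : ℚ) * x ^ k := by
  rw [gP_key m (by omega) 2 x]
  refine Finset.sum_congr rfl fun k hk => ?_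
  rw [Finset.mem_range] at hk
  have h2k : 2 * k ≤ m := by omega
  have hkm : k < m := by omega
  have hm0 : (m : ℚ) ≠ 0 := by positivity
  have hmk : (m : ℚ) - k ≠ 0 := by
    have : (k : ℚ) < m := by exact_mod_cast hkm
    intro h; linarith
  have hnat := Nat.choose_mul_succ_eq (m - k - 1) k
  rw [Nat.sub_add_cancel (by omega : 1 ≤ m - k)] at hnat
  have hcast : (((m - k - 1).choose k : ℕ) : ℚ) * ((m : ℚ) - k)
      = (((m - k).choose k : ℕ) : ℚ) * ((m : ℚ) - k - k) := by
    have h1 : ((m - k : ℕ) : ℚ) = (m : ℚ) - k := by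
      push_cast [Nat.cast_sub (le_of_lt hkm)]; ring
    have h2 : ((m - k - k : ℕ) : ℚ) = (m : ℚ) - k - k := by
      push_cast [Nat.cast_sub (by omega : k ≤ m - k), Nat.cast_sub (le_of_lt hkm)]; ring
    calc (((m - k - 1).choose k : ℕ) : ℚ) * ((m : ℚ) - k)
        = (((m - k - 1).choose k * (m - k) : ℕ) : ℚ) := by push_cast [h1]; ring
      _ = (((m - k).choose k * (m - k - k) : ℕ) : ℚ) := by rw [hnat]
      _ = (((m - k).choose k : ℕ) : ℚ) * ((m : ℚ) - k - k) := by push_cast [h2]; ring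
  have hmk1 : m - 1 - k = m - k - 1 := by omega
  rw [hmk1]
  field_simp
  linear_combination (-x ^ k) * hcast

theorem g_derivative_combination (n : ℕ) (hn : 2 ≤ n) (x : ℚ) :
    (gP (n + 1)).eval x - (2 / ((n : ℚ) + 1)) * x * (derivative (gP (n + 1))).eval x
      = (gP n).eval x - (1 / (n : ℚ)) * x * (derivative (gP n)).eval x := by
  have hB := gP_B (n + 1) (by omega) x
  have hA := gP_A n (by omega) x
  rw [show ((n + 1 : ℕ) : ℚ) = (n : ℚ) + 1 by push_cast; ring] at hB
  rw [hB, hA]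
  have h1 : ∑ k ∈ Finset.range ((n + 1) / 2 + 1), (((n + 1 - 1 - k).choose k : ℕ) : ℚ) * x ^ k
      = ∑ k ∈ Finset.range ((n + 1) / 2 + 1), (((n - k).choose k : ℕ) : ℚ) * x ^ k :=
    Finset.sum_congr rfl fun k _ => by norm_num
  rw [h1]
  have hsub : Finset.range (n / 2 + 1) ⊆ Finset.range ((n + 1) / 2 + 1) :=
    Finset.range_subset_range.2 (by omega)
  refine (Finset.sum_subset hsub fun k hk hk' => ?_).symm
  rw [Finset.mem_range] at hk hk'
  simp [Nat.choose_eq_zero_of_lt (show n - k < k by omega)]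
end

section
/- For every integer n ≥ 0 and every real (or rational) x ≠ 0, the Lucas polynomial satisfies l_n(x) = x^n·g_n(1/x²). -/
open Polynomial

/-- The Lucas polynomials, as functions on ℚ:
`l_0(x) = 2`, `l_1(x) = x`, `l_{n+1}(x) = x·l_n(x) + l_{n−1}(x)`. -/
def lucasP : ℕ → ℚ → ℚ
  | 0, _ => 2
  | 1, x => x
  | n + 2, x => x * lucasP (n + 1) x + lucasP n x

noncomputable def Aq (m k : ℕ) : ℚ := (m:ℚ)/((m:ℚ)-(k:ℚ)) * ((m-k).choose k : ℚ)

lemma coeff_id (n k : ℕ) (hn : 1 ≤ n) (hk : k ≤ n / 2) :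
    Aq (n+2) (k+1) = Aq (n+1) (k+1) + Aq n k := by
  unfold Aq
  push_cast
  have h2k : 2*k ≤ n := by omega
  have e1 : n+1-k = (n-k)+1 := by omega
  have e2 : n+1-(k+1) = n-k := by omega
  rw [e1]
  have hp : ((n-k)+1).choose (k+1) = (n-k).choose (k+1) + (n-k).choose k := by
    rw [Nat.choose_succ_succ]; exact Nat.add_comm _ _
  have hA : ((n-k).choose (k+1) : ℚ) * ((k:ℚ)+1) = ((n-k).choose k : ℚ) * ((n:ℚ)-2*k) := by
    have := Nat.choose_succ_right_eq (n-k) k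
    have e3 : n-k-k = n-2*k := by omega
    rw [e3] at this
    have := congrArg (fun m : ℕ => (m:ℚ)) this
    push_cast at this
    push_cast [Nat.cast_sub (by omega : 2*k ≤ n), Nat.cast_sub (by omega : k ≤ n)] at this ⊢
    linarith [this]
  rw [hp]
  push_cast
  have hkn : k < n := by omega
  have hknq : (k:ℚ) < (n:ℚ) := by exact_mod_cast hkn
  have d1 : ((n:ℚ)+2)-((k:ℚ)+1) ≠ 0 := by linarith
  have d2 : ((n:ℚ)+1)-((k:ℚ)+1) ≠ 0 := by linarith
  have d3 : (n:ℚ)-(k:ℚ) ≠ 0 := by linarith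
  have d4 : (k:ℚ)+1 ≠ 0 := by positivity
  field_simp
  nlinarith [hA, sq_nonneg ((n:ℚ)-(k:ℚ))]

lemma gP_eval (n : ℕ) (hn : n ≠ 0) (y : ℚ) :
    (gP n).eval y = ∑ k ∈ Finset.range (n/2+1), Aq n k * y^k := by
  simp [gP, if_neg hn, Aq, eval_finset_sum]

lemma gP_rec (n : ℕ) (hn : 1 ≤ n) (y : ℚ) :
    (gP (n+2)).eval y = (gP (n+1)).eval y + y * (gP n).eval y := by
  rw [gP_eval _ (by omega), gP_eval _ (by omega), gP_eval _ (by omega)]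
  have h2 : (n+2)/2+1 = n/2+2 := by omega
  rw [h2]
  have hsub : Finset.range ((n+1)/2+1) ⊆ Finset.range (n/2+2) :=
    Finset.range_subset_range.mpr (by omega)
  have he : (∑ k ∈ Finset.range ((n+1)/2+1), Aq (n+1) k * y^k)
      = ∑ k ∈ Finset.range (n/2+2), Aq (n+1) k * y^k := by
    refine Finset.sum_subset hsub ?_
    intro k hk hk'
    simp only [Finset.mem_range] at hk hk'
    have : n+1-k < k := by omega
    simp [Aq, Nat.choose_eq_zero_of_lt this]
  rw [he, Finset.mul_sum]
  rw [Finset.sum_range_succ' (fun k => Aq (n+2) k * y^k) (n/2+1),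
      Finset.sum_range_succ' (fun k => Aq (n+1) k * y^k) (n/2+1)]
  have hA0 : ∀ m : ℕ, 1 ≤ m → Aq m 0 = 1 := by
    intro m hm
    have : (m:ℚ) ≠ 0 := by positivity
    simp [Aq, div_self this]
  have hterm : ∀ k ∈ Finset.range (n/2+1),
      Aq (n+2) (k+1) * y^(k+1) = Aq (n+1) (k+1) * y^(k+1) + y * (Aq n k * y^k) := by
    intro k hk
    simp only [Finset.mem_range] at hk
    rw [coeff_id n k hn (by omega)]; ring
  rw [Finset.sum_congr rfl hterm, Finset.sum_add_distrib,
      hA0 _ (by omega), hA0 _ (by omega)]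
  ring

theorem lucas_eq_g (n : ℕ) (x : ℚ) (hx : x ≠ 0) :
    lucasP n x = x ^ n * (gP n).eval (1 / x ^ 2) := by
  have hx2 : x^2 ≠ 0 := pow_ne_zero _ hx
  induction n using Nat.twoStepInduction with
  | zero => simp [lucasP, gP]
  | one =>
    have : (gP 1).eval (1/x^2) = 1 := by
      rw [gP_eval 1 (by omega)]
      norm_num [Aq]
    rw [show lucasP 1 x = x from rfl, pow_one, this, mul_one]
  | more n ih1 ih2 =>
    have hlu : lucasP (n+2) x = x * lucasP (n+1) x + lucasP n x := rfl
    rcases Nat.eq_zero_or_pos n with h0 | hpos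
    · subst h0
      have : (gP 2).eval (1/x^2) = 1 + 2 * (1/x^2) := by
        rw [gP_eval 2 (by omega)]
        rw [show (2:ℕ)/2+1 = 2 from rfl, Finset.sum_range_succ, Finset.sum_range_one]
        norm_num [Aq]
      rw [hlu, this]
      simp [lucasP]
      field_simp
    · rw [hlu, ih1, ih2, gP_rec n hpos]
      field_simp
      ring
end

section
/- For every integer n ≥ 2 and every x, one has g_n(x) − (1/n)·x·g_n'(x) = h_n(x) and g_{n+1}(x) − (2/(n+1))·x·g_{n+1}'(x) = h_n(x). -/
/-!
Both operators `p ↦ p - c·x·p'` act diagonally on monomials, multiplying `x^k` by `1 - c·k`.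
With `c = 1/n` this turns the coefficient `n/(n-k)·C(n-k,k)` of `g_n` into `C(n-k,k)`.
With `c = 2/(n+1)` it turns the coefficient of `g_{n+1}` into `(n+1-2k)/(n+1-k)·C(n+1-k,k)`,
which is `C(n-k,k)` by the absorption identity `C(m,k)·(m+1) = C(m+1,k)·(m+1-k)` at `m = n-k`.
-/

open Polynomial

theorem eval_sum_sub_mul_eval_derivative {R : Type*} [CommRing R] (a : ℕ → R) (c x : R)
    (s : Finset ℕ) :
    eval x (∑ k ∈ s, C (a k) * X ^ k) - c * x * eval x (derivative (∑ k ∈ s, C (a k) * X ^ k))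
      = eval x (∑ k ∈ s, C (a k * (1 - c * k)) * X ^ k) := by
  simp only [derivative_sum, derivative_C_mul_X_pow, eval_finsetSum, eval_mul, eval_C,
    eval_pow, eval_X]
  rw [Finset.mul_sum, ← Finset.sum_sub_distrib]
  refine Finset.sum_congr rfl fun k _ => ?_
  cases k with
  | zero => simp
  | succ j =>
    push_cast
    ring

theorem hP_eq_sum_range {n m : ℕ} (hm : n / 2 + 1 ≤ m) :
    hP n = ∑ k ∈ Finset.range m, C (((n - k).choose k : ℕ) : ℚ) * X ^ k := by
  refine Finset.sum_subset (Finset.range_subset_range.mpr hm) fun k _ hk => ?_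
  rw [Finset.mem_range] at hk
  rw [Nat.choose_eq_zero_of_lt (by omega : n - k < k), Nat.cast_zero, C_0, zero_mul]

theorem cast_choose_sub_mul_eq {n k : ℕ} (hk : 2 * k ≤ n + 1) :
    (((n - k).choose k : ℕ) : ℚ) * ((n : ℚ) + 1 - k)
      = (((n + 1 - k).choose k : ℕ) : ℚ) * ((n : ℚ) + 1 - 2 * k) := by
  have h := Nat.choose_mul_succ_eq (n - k) k
  rw [show n - k + 1 = n + 1 - k by omega, show n + 1 - k - k = n + 1 - 2 * k by omega] at h
  have hq := congrArg (Nat.cast : ℕ → ℚ) h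
  push_cast [Nat.cast_sub (by omega : k ≤ n + 1), Nat.cast_sub hk] at hq
  exact hq

theorem gP_coeff_mul_one_sub_inv {n k : ℕ} (hk : k < n) :
    (n : ℚ) / (n - k) * ((n - k).choose k : ℕ) * (1 - 1 / n * k) = ((n - k).choose k : ℕ) := by
  have hkQ : (k : ℚ) < n := by exact_mod_cast hk
  have hn : (n : ℚ) ≠ 0 := by linarith [k.cast_nonneg (α := ℚ)]
  have hnk : (n : ℚ) - k ≠ 0 := by linarith
  field_simp

theorem gP_succ_coeff_mul_one_sub_two_div {n k : ℕ} (hk : 2 * k ≤ n + 1) :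
    ((n + 1 : ℕ) : ℚ) / ((n + 1 : ℕ) - k) * ((n + 1 - k).choose k : ℕ)
        * (1 - 2 / ((n : ℚ) + 1) * k) = ((n - k).choose k : ℕ) := by
  have hnk : (n : ℚ) + 1 - k ≠ 0 := by
    have : (k : ℚ) < n + 1 := by exact_mod_cast (by omega : k < n + 1)
    linarith
  have hn : (n : ℚ) + 1 ≠ 0 := by positivity
  push_cast
  field_simp
  linear_combination -cast_choose_sub_mul_eq hk

theorem g_minus_euler_eq_h (n : ℕ) (hn : 2 ≤ n) (x : ℚ) :
    (gP n).eval x - (1 / (n : ℚ)) * x * (derivative (gP n)).eval x = (hP n).eval x ∧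
    (gP (n + 1)).eval x - (2 / ((n : ℚ) + 1)) * x * (derivative (gP (n + 1))).eval x
      = (hP n).eval x := by
  constructor
  · rw [gP, if_neg (by omega), eval_sum_sub_mul_eval_derivative, hP]
    refine congrArg (eval x) (Finset.sum_congr rfl fun k hk => ?_)
    rw [gP_coeff_mul_one_sub_inv (by rw [Finset.mem_range] at hk; omega)]
  · rw [gP, if_neg (by omega), eval_sum_sub_mul_eval_derivative,
      hP_eq_sum_range (m := (n + 1) / 2 + 1) (by omega)]
    refine congrArg (eval x) (Finset.sum_congr rfl fun k hk => ?_)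
    rw [gP_succ_coeff_mul_one_sub_two_div (by rw [Finset.mem_range] at hk; omega)]
end

section
/- For every integer n ≥ 2, the bivariate polynomials A_{n+1} and A_n satisfy the canonical Poisson-bracket identity (∂A_{n+1}/∂w)·(∂A_n/∂π) − (∂A_{n+1}/∂π)·(∂A_n/∂w) = n·(n+1)·(−1)^{n−1}·w^{n−1} as polynomials in the variables w and π. -/
open MvPolynomial

/-- The bivariate polynomial
`A_n(w,π) = Σ_{k=0}^{⌊n/2⌋} (n/(n−k))·binom(n−k, k)·w^k·π^{n−2k}` over ℚ,
where `w = X 0` and `π = X 1`. -/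
noncomputable def A (n : ℕ) : MvPolynomial (Fin 2) ℚ :=
  ∑ k ∈ Finset.range (n / 2 + 1),
    C ((n : ℚ) / ((n : ℚ) - (k : ℚ)) * (((n - k).choose k : ℕ) : ℚ)) *
      X 0 ^ k * X 1 ^ (n - 2 * k)

/-- The Fibonacci-type polynomial `F_{m+1}(w,π) = Σ_j binom(m−j, j)·w^j·π^{m−2j}`,
satisfying `Fs (m+2) = π·Fs (m+1) + w·Fs m`. -/
noncomputable def Fs (m : ℕ) : MvPolynomial (Fin 2) ℚ :=
  ∑ j ∈ Finset.range (m / 2 + 1),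
    C (((m - j).choose j : ℕ) : ℚ) * X 0 ^ j * X 1 ^ (m - 2 * j)

lemma Fs_eq (m N : ℕ) (h : m / 2 + 1 ≤ N) :
    Fs m = ∑ j ∈ Finset.range N,
      C (((m - j).choose j : ℕ) : ℚ) * X 0 ^ j * X 1 ^ (m - 2 * j) := by
  rw [Fs]
  refine Finset.sum_subset (Finset.range_subset_range.2 h) ?_
  intro j hj hj'
  simp only [Finset.mem_range, not_lt] at hj hj'
  rw [Nat.choose_eq_zero_of_lt (by omega)]
  simp

lemma Fs_rec (m : ℕ) : Fs (m + 2) = X 1 * Fs (m + 1) + X 0 * Fs m := by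
  rw [Fs_eq (m+2) (m/2+2) (by omega), Fs_eq (m+1) (m/2+2) (by omega), Fs]
  rw [Finset.mul_sum, Finset.mul_sum]
  rw [Finset.sum_range_succ' _ (m/2+1), Finset.sum_range_succ'
    (fun j => X 1 * (C (((m+1-j).choose j : ℕ) : ℚ) * X 0 ^ j * X 1 ^ (m+1-2*j))) (m/2+1)]
  have h0 : (C (((m+2-0).choose 0 : ℕ) : ℚ) * X 0 ^ 0 * X 1 ^ (m+2-2*0) : MvPolynomial (Fin 2) ℚ)
      = X 1 * (C (((m+1-0).choose 0 : ℕ) : ℚ) * X 0 ^ 0 * X 1 ^ (m+1-2*0)) := by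
    simp [pow_succ]
    ring
  rw [h0]
  have hmain : ∀ j ∈ Finset.range (m/2+1),
      (C (((m+2-(j+1)).choose (j+1) : ℕ) : ℚ) * X 0 ^ (j+1) * X 1 ^ (m+2-2*(j+1)) : MvPolynomial (Fin 2) ℚ)
      = X 1 * (C (((m+1-(j+1)).choose (j+1) : ℕ) : ℚ) * X 0 ^ (j+1) * X 1 ^ (m+1-2*(j+1)))
        + X 0 * (C (((m-j).choose j : ℕ) : ℚ) * X 0 ^ j * X 1 ^ (m-2*j)) := by
    intro j hj
    simp only [Finset.mem_range] at hj
    by_cases h : 2*j < m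
    · obtain ⟨e, he⟩ : ∃ e, m - 2*j = e + 1 := ⟨m - 2*j - 1, by omega⟩
      rw [show m+2-(j+1) = (m-j)+1 by omega, Nat.choose_succ_succ,
        show m+1-(j+1) = m-j by omega,
        show m+2-2*(j+1) = e+1 by omega, show m+1-2*(j+1) = e by omega,
        show m-2*j = e+1 by omega]
      push_cast
      rw [map_add]
      ring
    · have hj2 : 2*j = m := by omega
      rw [show m+1-(j+1) = j by omega,
        (Nat.choose_eq_zero_of_lt (Nat.lt_succ_self j) : j.choose (j+1) = 0)]
      rw [show m+2-(j+1) = j+1 by omega, Nat.choose_self,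
        show m+2-2*(j+1) = 0 by omega, show m-j = j by omega, Nat.choose_self,
        show m-2*j = 0 by omega]
      simp [pow_succ]
      ring
  rw [Finset.sum_congr rfl hmain, Finset.sum_add_distrib]
  ring

lemma Fs_cassini : ∀ m : ℕ, Fs (m+1) * Fs (m+1) - Fs (m+2) * Fs m
    = (-1 : MvPolynomial (Fin 2) ℚ) ^ (m+1) * X 0 ^ (m+1) := by
  intro m
  induction m with
  | zero =>
    have h0 : Fs 0 = 1 := by simp [Fs]
    have h1 : Fs 1 = X 1 := by simp [Fs]
    rw [Fs_rec 0, h0, h1]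
    ring
  | succ m ih =>
    have h := Fs_rec (m+1)
    have h' := Fs_rec m
    rw [h]
    linear_combination (Fs (m+2)) * h' - (X 0 : MvPolynomial (Fin 2) ℚ) * ih

lemma coeff2 (n k : ℕ) (hn : 1 ≤ n) (hk : k ≤ n/2) :
    (n : ℚ) / ((n : ℚ) - (k : ℚ)) * (((n - k).choose k : ℕ) : ℚ) * ((n - 2*k : ℕ) : ℚ)
      = (n : ℚ) * (((n - 1 - k).choose k : ℕ) : ℚ) := by
  have hkn : k ≤ n := by omega
  have N := Nat.choose_mul_succ_eq (n-k-1) k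
  rw [show n-k-1+1 = n-k by omega, show n-k-k = n-2*k by omega] at N
  have NQ : (((n-k-1).choose k : ℕ) : ℚ) * ((n-k : ℕ) : ℚ)
      = (((n-k).choose k : ℕ) : ℚ) * ((n - 2*k : ℕ):ℚ) := by exact_mod_cast congrArg (Nat.cast (R := ℚ)) N
  have hne : ((n:ℚ)) - (k:ℚ) ≠ 0 := by
    have : (k:ℚ) < (n:ℚ) := by exact_mod_cast (by omega : k < n)
    linarith
  rw [show ((n:ℚ) - (k:ℚ)) = ((n-k : ℕ) : ℚ) by push_cast [hkn]; ring] at hne ⊢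
  rw [div_mul_eq_mul_div, div_mul_eq_mul_div, div_eq_iff hne, show n-1-k = n-k-1 by omega]
  linear_combination -(n:ℚ) * NQ

lemma coeff1 (n k : ℕ) (h1 : 1 ≤ k) (hk : k ≤ n/2) :
    (n : ℚ) / ((n : ℚ) - (k : ℚ)) * (((n - k).choose k : ℕ) : ℚ) * (k : ℚ)
      = (n : ℚ) * (((n - 1 - k).choose (k-1) : ℕ) : ℚ) := by
  have hkn : k ≤ n := by omega
  have N := Nat.add_one_mul_choose_eq (n-k-1) (k-1)
  rw [show n-k-1+1 = n-k by omega, show k-1+1 = k by omega] at N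
  have NQ : ((n-k : ℕ) : ℚ) * (((n-k-1).choose (k-1) : ℕ) : ℚ)
      = (((n-k).choose k : ℕ) : ℚ) * (k : ℚ) := by exact_mod_cast congrArg (Nat.cast (R := ℚ)) N
  have hne : ((n:ℚ)) - (k:ℚ) ≠ 0 := by
    have : (k:ℚ) < (n:ℚ) := by exact_mod_cast (by omega : k < n)
    linarith
  rw [show ((n:ℚ) - (k:ℚ)) = ((n-k : ℕ) : ℚ) by push_cast [hkn]; ring] at hne ⊢
  rw [div_mul_eq_mul_div, div_mul_eq_mul_div, div_eq_iff hne, show n-1-k = n-k-1 by omega]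
  linear_combination -(n:ℚ) * NQ

lemma pderiv0_term (a : ℚ) (k e : ℕ) :
    pderiv (0 : Fin 2) (C a * X 0 ^ k * X 1 ^ e : MvPolynomial (Fin 2) ℚ)
    = C (a * k) * X 0 ^ (k-1) * X 1 ^ e := by
  simp [pderiv_mul, pderiv_pow, pderiv_X]
  ring

lemma pderiv1_term (a : ℚ) (k e : ℕ) :
    pderiv (1 : Fin 2) (C a * X 0 ^ k * X 1 ^ e : MvPolynomial (Fin 2) ℚ)
    = C (a * e) * X 0 ^ k * X 1 ^ (e-1) := by
  simp [pderiv_mul, pderiv_pow, pderiv_X]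
  ring

lemma pd1_A (n : ℕ) (hn : 1 ≤ n) :
    pderiv (1 : Fin 2) (A n) = C (n : ℚ) * Fs (n - 1) := by
  rw [A, map_sum, Fs_eq (n-1) (n/2+1) (by omega), Finset.mul_sum]
  refine Finset.sum_congr rfl ?_
  intro k hk
  simp only [Finset.mem_range] at hk
  rw [pderiv1_term, coeff2 n k hn (by omega), show n - 2*k - 1 = n - 1 - 2*k by omega,
    map_mul]
  ring

lemma pd0_A (n : ℕ) (hn : 2 ≤ n) :
    pderiv (0 : Fin 2) (A n) = C (n : ℚ) * Fs (n - 2) := by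
  rw [A, map_sum, Fs_eq (n-2) (n/2) (by omega), Finset.mul_sum]
  rw [Finset.sum_range_succ' (fun k => pderiv (0 : Fin 2)
    (C ((n : ℚ) / ((n : ℚ) - (k : ℚ)) * (((n - k).choose k : ℕ) : ℚ)) *
      X 0 ^ k * X 1 ^ (n - 2 * k))) (n/2)]
  have h0 : pderiv (0 : Fin 2)
      (C ((n : ℚ) / ((n : ℚ) - ((0:ℕ) : ℚ)) * (((n - 0).choose 0 : ℕ) : ℚ)) *
        X 0 ^ 0 * X 1 ^ (n - 2 * 0)) = 0 := by
    rw [pderiv0_term]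
    simp
  rw [h0, add_zero]
  refine Finset.sum_congr rfl ?_
  intro k hk
  simp only [Finset.mem_range] at hk
  rw [pderiv0_term, coeff1 n (k+1) (by omega) (by omega),
    show n - 1 - (k+1) = n - 2 - k by omega, show k+1-1 = k by omega,
    show n - 2*(k+1) = n - 2 - 2*k by omega, map_mul]
  ring

theorem poisson_bracket_A_succ (n : ℕ) (hn : 2 ≤ n) :
    pderiv (0 : Fin 2) (A (n + 1)) * pderiv (1 : Fin 2) (A n)
      - pderiv (1 : Fin 2) (A (n + 1)) * pderiv (0 : Fin 2) (A n)
      = C ((n : ℚ) * ((n : ℚ) + 1) * (-1) ^ (n - 1)) * X 0 ^ (n - 1) := by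
  have h1 : pderiv (0 : Fin 2) (A (n+1)) = C ((n:ℚ)+1) * Fs (n-1) := by
    have := pd0_A (n+1) (by omega)
    rw [show n+1-2 = n-1 by omega, show (((n+1:ℕ)):ℚ) = (n:ℚ)+1 by push_cast; ring] at this
    exact this
  have h2 : pderiv (1 : Fin 2) (A (n+1)) = C ((n:ℚ)+1) * Fs n := by
    have := pd1_A (n+1) (by omega)
    rw [show n+1-1 = n by omega, show (((n+1:ℕ)):ℚ) = (n:ℚ)+1 by push_cast; ring] at this
    exact this
  have h3 := pd1_A n (by omega)
  have h4 := pd0_A n (by omega)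
  have hc := Fs_cassini (n-2)
  rw [show n-2+1 = n-1 by omega, show n-2+2 = n by omega] at hc
  rw [h1, h2, h3, h4, map_mul, map_mul, map_pow, map_neg, map_one]
  linear_combination (C ((n:ℚ)+1) * C (n:ℚ)) * hc
end

section
/- For every integer n ≥ 2, one has the identity ∂A_{n+1}/∂π = ((n+1)/(2n))·(π·∂A_n/∂π + n·A_n) as polynomials in the variables w and π. -/
open MvPolynomial

lemma pd_term (a : ℚ) (k m : ℕ) :
    pderiv (1 : Fin 2) (C a * X 0 ^ k * X 1 ^ m : MvPolynomial (Fin 2) ℚ)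
      = C (a * m) * X 0 ^ k * X 1 ^ (m - 1) := by
  rw [mul_assoc, pderiv_C_mul, pderiv_mul, pderiv_pow, pderiv_pow,
    pderiv_X_self, pderiv_X_of_ne (by decide : (0 : Fin 2) ≠ 1)]
  rw [show (C (a * (m:ℚ)) : MvPolynomial (Fin 2) ℚ)
      = C a * ((m : ℕ) : MvPolynomial (Fin 2) ℚ) by rw [map_mul, map_natCast]]
  ring

lemma X1_absorb (b : ℚ) (k m : ℕ) :
    (X 1 : MvPolynomial (Fin 2) ℚ) * (C (b * m) * X 0 ^ k * X 1 ^ (m - 1))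
      = C (b * m) * X 0 ^ k * X 1 ^ m := by
  cases m with
  | zero => simp
  | succ m =>
    have h : (X 1 : MvPolynomial (Fin 2) ℚ) * X 1 ^ (m + 1 - 1) = X 1 ^ (m + 1) := by
      rw [Nat.add_sub_cancel, pow_succ]; ring
    calc (X 1 : MvPolynomial (Fin 2) ℚ) * (C (b * (m+1 : ℕ)) * X 0 ^ k * X 1 ^ (m + 1 - 1))
        = C (b * (m+1 : ℕ)) * X 0 ^ k * (X 1 * X 1 ^ (m + 1 - 1)) := by ring
      _ = _ := by rw [h]

theorem pderiv_pi_A_succ (n : ℕ) (hn : 2 ≤ n) :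
    pderiv (1 : Fin 2) (A (n + 1))
      = C (((n : ℚ) + 1) / (2 * (n : ℚ))) *
          (X 1 * pderiv (1 : Fin 2) (A n) + C (n : ℚ) * A n) := by
  have hn0 : (n : ℚ) ≠ 0 := by positivity
  have lhs_eq : pderiv (1 : Fin 2) (A (n + 1))
      = ∑ k ∈ Finset.range (n / 2 + 1),
        C (((n : ℚ) + 1) * ((n - k).choose k : ℕ)) * X 0 ^ k * X 1 ^ (n - 2 * k) := by
    rw [A, map_sum]
    rw [show Finset.range ((n + 1) / 2 + 1)
        = Finset.range (n / 2 + 1) ∪ (Finset.range ((n + 1) / 2 + 1) \ Finset.range (n / 2 + 1))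
        from ?_]
    · rw [Finset.sum_union Finset.disjoint_sdiff]
      have hz : ∀ k ∈ Finset.range ((n + 1) / 2 + 1) \ Finset.range (n / 2 + 1),
          pderiv (1 : Fin 2)
            (C ((↑(n+1) : ℚ) / ((↑(n+1) : ℚ) - k) * (((n + 1 - k).choose k : ℕ) : ℚ)) *
              X 0 ^ k * X 1 ^ (n + 1 - 2 * k)) = 0 := by
        intro k hk
        simp only [Finset.mem_sdiff, Finset.mem_range, not_lt] at hk
        have h1 : k ≤ (n + 1) / 2 := Nat.lt_succ_iff.mp hk.1
        have hm : n + 1 - 2 * k = 0 := by omega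
        rw [pd_term, hm]
        simp
      rw [Finset.sum_eq_zero hz, add_zero]
      refine Finset.sum_congr rfl ?_
      intro k hk
      rw [Finset.mem_range, Nat.lt_succ_iff] at hk
      have h2k : 2 * k ≤ n := by omega
      rw [pd_term]
      rw [show n + 1 - 2 * k - 1 = n - 2 * k by omega]
      refine congrArg (fun c => C c * X 0 ^ k * X 1 ^ (n - 2 * k)) ?_
      -- coefficient identity
      have hcN : (n - k).choose k * (n + 1 - k) = (n + 1 - k).choose k * (n + 1 - 2 * k) := by
        have h := Nat.choose_mul_succ_eq (n - k) k
        rw [show n - k + 1 = n + 1 - k by omega] at h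
        rw [show n + 1 - k - k = n + 1 - 2 * k by omega] at h
        exact h
      have hc : ((n - k).choose k : ℚ) * ((n : ℚ) + 1 - k)
          = ((n + 1 - k).choose k : ℚ) * ((n : ℚ) + 1 - 2 * k) := by
        have h := congrArg (Nat.cast : ℕ → ℚ) hcN
        push_cast [Nat.cast_sub (show k ≤ n + 1 by omega),
          Nat.cast_sub (show 2 * k ≤ n + 1 by omega)] at h
        linear_combination h
      have hne : ((n : ℚ) + 1 - k) ≠ 0 := by
        have hkn : (k : ℚ) ≤ n := by exact_mod_cast (by omega : k ≤ n)
        linarith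
      push_cast [Nat.cast_sub (show 2 * k ≤ n + 1 by omega)]
      field_simp
      linear_combination (-1 : ℚ) * hc
    · rw [Finset.union_sdiff_of_subset (Finset.range_subset_range.mpr (by omega))]
  rw [lhs_eq, A, map_sum, Finset.mul_sum, Finset.mul_sum, ← Finset.sum_add_distrib,
    Finset.mul_sum]
  refine Finset.sum_congr rfl ?_
  intro k hk
  rw [Finset.mem_range, Nat.lt_succ_iff] at hk
  have h2k : 2 * k ≤ n := by omega
  have hkn : k < n := by omega
  rw [pd_term, X1_absorb]
  have hne : ((n : ℚ) - k) ≠ 0 := by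
    have : (k : ℚ) < n := by exact_mod_cast hkn
    linarith
  have hco : ((n : ℚ) + 1) * (((n - k).choose k : ℕ) : ℚ)
      = ((n : ℚ) + 1) / (2 * n) *
        ((n : ℚ) / ((n : ℚ) - k) * (((n - k).choose k : ℕ) : ℚ) * ((n - 2 * k : ℕ) : ℚ)
          + (n : ℚ) * ((n : ℚ) / ((n : ℚ) - k) * (((n - k).choose k : ℕ) : ℚ))) := by
    push_cast [Nat.cast_sub h2k]
    field_simp
    ring
  calc (C (((n : ℚ) + 1) * (((n - k).choose k : ℕ) : ℚ)) * X 0 ^ k * X 1 ^ (n - 2 * k)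
        : MvPolynomial (Fin 2) ℚ)
      = C (((n : ℚ) + 1) / (2 * n) *
          ((n : ℚ) / ((n : ℚ) - k) * (((n - k).choose k : ℕ) : ℚ) * ((n - 2 * k : ℕ) : ℚ)
            + (n : ℚ) * ((n : ℚ) / ((n : ℚ) - k) * (((n - k).choose k : ℕ) : ℚ)))) *
          X 0 ^ k * X 1 ^ (n - 2 * k) := by rw [← hco]
    _ = _ := by
        simp only [map_mul, map_add]
        ring
end

section
/- For every integer n ≥ 3, one has the identity n·(∂A_{n−1}/∂π) = (n−1)·(∂A_n/∂w) as polynomials in the variables w and π. -/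
/-!
Since `binom(n - k, k) = 0` for `2k > n`, both `A (n - 1)` and `A n` may be summed over a common
range of `k`. Shifting `k ↦ k + 1` in `∂A_n/∂w` matches the monomials of the two sides, and the
coefficients agree by the absorption identity `binom(l, k + 1) (k + 1) = binom(l, k) (l - k)`
for `l = n - 1 - k`.
-/

open MvPolynomial

section PderivTerm

variable {R σ : Type*} [CommSemiring R] {i j : σ}

theorem pderiv_C_mul_X_pow_mul_X_pow_left (hij : i ≠ j) (a : R) (k m : ℕ) :
    pderiv i (C a * X i ^ k * X j ^ m) = C (a * k) * X i ^ (k - 1) * X j ^ m := by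
  simp [Derivation.leibniz, Derivation.leibniz_pow, hij.symm, nsmul_eq_mul]
  ring

theorem pderiv_C_mul_X_pow_mul_X_pow_right (hij : i ≠ j) (a : R) (k m : ℕ) :
    pderiv j (C a * X i ^ k * X j ^ m) = C (a * m) * X i ^ k * X j ^ (m - 1) := by
  simp [Derivation.leibniz, Derivation.leibniz_pow, hij, nsmul_eq_mul]
  ring

end PderivTerm

noncomputable def coeffA (n k : ℕ) : ℚ :=
  (n : ℚ) / ((n : ℚ) - (k : ℚ)) * (((n - k).choose k : ℕ) : ℚ)

theorem coeffA_eq_zero (n k : ℕ) (hk : n < 2 * k) : coeffA n k = 0 := by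
  simp [coeffA, Nat.choose_eq_zero_of_lt (show n - k < k by omega)]

-- Both sides carry the denominator `m - k`, so no case of division by zero has to be excluded.
theorem coeffA_mul_sub (m k : ℕ) :
    ((m : ℚ) + 1) * coeffA m k * ((m - 2 * k : ℕ) : ℚ)
      = m * coeffA (m + 1) (k + 1) * ((k : ℚ) + 1) := by
  have hchoose : (((m - k).choose (k + 1) : ℕ) : ℚ) * ((k : ℚ) + 1)
      = (((m - k).choose k : ℕ) : ℚ) * ((m - 2 * k : ℕ) : ℚ) := by
    rw [show m - 2 * k = m - k - k by omega]
    exact_mod_cast Nat.choose_succ_right_eq (m - k) k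
  simp only [coeffA, Nat.add_sub_add_right, Nat.cast_add, Nat.cast_one,
    add_sub_add_right_eq_sub]
  linear_combination (-((m : ℚ) + 1) * m / ((m : ℚ) - k)) * hchoose

theorem A_eq_sum_range {n N : ℕ} (hN : n / 2 + 1 ≤ N) :
    A n = ∑ k ∈ Finset.range N, C (coeffA n k) * X 0 ^ k * X 1 ^ (n - 2 * k) := by
  refine Finset.sum_subset (Finset.range_subset_range.mpr hN) fun k _ hk => ?_
  rw [Finset.mem_range] at hk
  change C (coeffA n k) * _ * _ = 0
  rw [coeffA_eq_zero n k (by omega), C_0, zero_mul, zero_mul]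

theorem pderiv_pi_A_pred_general (n : ℕ) :
    C (n : ℚ) * pderiv (1 : Fin 2) (A (n - 1))
      = C ((n : ℚ) - 1) * pderiv (0 : Fin 2) (A n) := by
  obtain _ | m := n
  · -- the only coefficient of `A 0` is the junk value `0 / 0 = 0`
    simp [A]
  have h01 : (0 : Fin 2) ≠ 1 := by decide
  rw [Nat.add_sub_cancel, A_eq_sum_range (n := m) (N := m + 1) (by omega),
    A_eq_sum_range (n := m + 1) (N := m + 2) (by omega),
    Finset.sum_range_succ' _ (m + 1)]
  simp only [map_add, map_sum, pderiv_C_mul_X_pow_mul_X_pow_left h01,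
    pderiv_C_mul_X_pow_mul_X_pow_right h01, Nat.cast_zero, mul_zero, C_0, zero_mul, add_zero,
    Finset.mul_sum, ← C_mul, ← mul_assoc]
  refine Finset.sum_congr rfl fun k _ => ?_
  rw [show m + 1 - 2 * (k + 1) = m - 2 * k - 1 by omega, Nat.add_sub_cancel]
  push_cast
  rw [coeffA_mul_sub, add_sub_cancel_right]

theorem pderiv_pi_A_pred (n : ℕ) (hn : 3 ≤ n) :
    C (n : ℚ) * pderiv (1 : Fin 2) (A (n - 1))
      = C ((n : ℚ) - 1) * pderiv (0 : Fin 2) (A n) :=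
  pderiv_pi_A_pred_general n
end

section
/- For every integer n ≥ 3, the bivariate polynomials A_{n−1} and A_n satisfy the canonical Poisson-bracket identity (∂A_{n−1}/∂w)·(∂A_n/∂π) − (∂A_{n−1}/∂π)·(∂A_n/∂w) = n·(n−1)·(−1)^{n−1}·w^{n−2} as polynomials in the variables w and π. -/
/-!
`A n` is the Lucas polynomial in `w = X 0`, `π = X 1`. Writing `F` for the Fibonacci
polynomials, `F (n + 2) = π F (n + 1) + w F n`, which satisfy
`F (n + 1) = ∑_{i + j = n} (i choose j) w ^ j π ^ (i - j)`, termwise differentiation of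
`A n = ∑_{i + j = n} (n / i) (i choose j) w ^ j π ^ (i - j)` gives
`∂A_n/∂π = n F_n` and `∂A_n/∂w = n F_{n-1}`. The bracket is therefore
`n (n - 1) (F_{n-2} F_n - F_{n-1}²)`, and Cassini's identity
`F_{n-2} F_n - F_{n-1}² = -(-w) ^ (n - 2)` finishes the proof.
-/

open MvPolynomial

open Finset

section Fibonacci

variable {R : Type*} [CommRing R]

def fibPoly (x y : R) : ℕ → R
  | 0 => 0
  | 1 => 1
  | n + 2 => y * fibPoly x y (n + 1) + x * fibPoly x y n

theorem fibPoly_mul_fibPoly_add_two_sub_sq (x y : R) (n : ℕ) :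
    fibPoly x y n * fibPoly x y (n + 2) - fibPoly x y (n + 1) ^ 2 = -(-x) ^ n := by
  induction n with
  | zero => simp [fibPoly]
  | succ n ih =>
    have h2 : fibPoly x y (n + 2) = y * fibPoly x y (n + 1) + x * fibPoly x y n := rfl
    have h3 : fibPoly x y (n + 3) = y * fibPoly x y (n + 2) + x * fibPoly x y (n + 1) := rfl
    rw [h3]
    linear_combination (-x) * ih - fibPoly x y (n + 2) * h2

theorem mul_choose_succ_mul_pow_sub (y : R) (i j : ℕ) :
    y * ((i.choose (j + 1) : R) * y ^ (i - (j + 1))) = i.choose (j + 1) * y ^ (i - j) := by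
  rcases lt_or_ge j i with h | h
  · rw [show i - j = i - (j + 1) + 1 by omega, pow_succ]
    ring
  · simp [Nat.choose_eq_zero_of_lt (Nat.lt_succ_of_le h)]

theorem fibPoly_succ_eq_sum_antidiagonal (x y : R) :
    ∀ n : ℕ, fibPoly x y (n + 1) =
      ∑ p ∈ antidiagonal n, (p.1.choose p.2 : R) * x ^ p.2 * y ^ (p.1 - p.2)
  | 0 => by simp [fibPoly]
  | 1 => by simp [fibPoly, Nat.antidiagonal_succ]
  | n + 2 => by
    rw [fibPoly, fibPoly_succ_eq_sum_antidiagonal x y (n + 1),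
      fibPoly_succ_eq_sum_antidiagonal x y n, Nat.sum_antidiagonal_succ (n := n + 1),
      Nat.sum_antidiagonal_succ' (n := n), Nat.sum_antidiagonal_succ' (n := n)]
    simp only [Nat.choose_zero_succ, Nat.choose_zero_right, Nat.choose_succ_succ, Nat.cast_zero,
      Nat.cast_one, Nat.cast_add, zero_mul, zero_add, one_mul, pow_zero, Nat.sub_zero,
      Nat.succ_eq_add_one, Nat.add_sub_add_right, mul_add, mul_sum]
    rw [← pow_succ', add_assoc, ← sum_add_distrib]
    congr 1
    refine sum_congr rfl fun p _ => ?_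
    linear_combination x ^ (p.2 + 1) * mul_choose_succ_mul_pow_sub y p.1 p.2

end Fibonacci

section Derivatives

variable {R : Type*} [CommSemiring R]

theorem pderiv_zero_C_mul_X_pow_mul_X_pow (a : R) (j e : ℕ) :
    pderiv 0 (C a * X 0 ^ j * X 1 ^ e : MvPolynomial (Fin 2) R)
      = C (a * j) * X 0 ^ (j - 1) * X 1 ^ e := by
  simp only [Derivation.leibniz, Derivation.leibniz_pow, pderiv_X, Pi.single_eq_same,
    Pi.single_eq_of_ne one_ne_zero, smul_eq_mul, mul_one, mul_zero, nsmul_eq_mul,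
    derivation_C, add_zero, zero_add, C_mul, map_natCast]
  ring

theorem pderiv_one_C_mul_X_pow_mul_X_pow (a : R) (j e : ℕ) :
    pderiv 1 (C a * X 0 ^ j * X 1 ^ e : MvPolynomial (Fin 2) R)
      = C (a * e) * X 0 ^ j * X 1 ^ (e - 1) := by
  simp only [Derivation.leibniz, Derivation.leibniz_pow, pderiv_X, Pi.single_eq_same,
    Pi.single_eq_of_ne zero_ne_one, smul_eq_mul, mul_one, mul_zero, nsmul_eq_mul,
    derivation_C, add_zero, C_mul, map_natCast]
  ring

end Derivatives

theorem A_eq_sum_antidiagonal (n : ℕ) :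
    A n = ∑ p ∈ antidiagonal n,
      C ((n : ℚ) / p.1 * (p.1.choose p.2 : ℕ)) * X 0 ^ p.2 * X 1 ^ (p.1 - p.2) := by
  set g : ℕ → MvPolynomial (Fin 2) ℚ := fun k =>
    C ((n : ℚ) / ((n : ℚ) - (k : ℚ)) * (((n - k).choose k : ℕ) : ℚ)) *
      X 0 ^ k * X 1 ^ (n - 2 * k)
  have h_range : A n = ∑ k ∈ range (n + 1), g k := by
    refine sum_subset (range_subset_range.2 (by omega)) fun k hk hk' => ?_
    simp only [mem_range] at hk hk'
    simp [Nat.choose_eq_zero_of_lt (show n - k < k by omega)]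
  have h_antidiagonal : ∑ k ∈ range (n + 1), g k = ∑ p ∈ antidiagonal n, g p.2 := by
    rw [← Nat.sum_antidiagonal_swap]
    exact (Nat.sum_antidiagonal_eq_sum_range_succ_mk (fun p => g p.1) n).symm
  rw [h_range, h_antidiagonal]
  refine sum_congr rfl fun p hp => ?_
  obtain rfl : p.1 + p.2 = n := mem_antidiagonal.1 hp
  simp only [g, Nat.cast_add, add_sub_cancel_right, Nat.add_sub_cancel]
  congr 2
  omega

section Binomial

variable {K : Type*} [Field K] [CharZero K]

theorem div_mul_choose_mul_sub (a : K) (i j : ℕ) :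
    a / ((i + 1 : ℕ) : K) * ((i + 1).choose j : ℕ) * ((i + 1 - j : ℕ) : K) =
      a * (i.choose j : ℕ) := by
  rw [mul_assoc, ← Nat.cast_mul, ← Nat.choose_mul_succ_eq]
  push_cast
  field_simp

theorem div_mul_choose_succ_mul_succ (a : K) (i j : ℕ) :
    a / ((i + 1 : ℕ) : K) * ((i + 1).choose (j + 1) : ℕ) * ((j + 1 : ℕ) : K) =
      a * (i.choose j : ℕ) := by
  rw [mul_assoc, ← Nat.cast_mul, ← Nat.add_one_mul_choose_eq]
  push_cast
  field_simp

end Binomial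

theorem pderiv_one_A_succ (n : ℕ) :
    pderiv 1 (A (n + 1)) = ((n : MvPolynomial (Fin 2) ℚ) + 1) * fibPoly (X 0) (X 1) (n + 1) := by
  rw [A_eq_sum_antidiagonal, map_sum, Nat.sum_antidiagonal_succ,
    fibPoly_succ_eq_sum_antidiagonal, mul_sum]
  simp only [pderiv_one_C_mul_X_pow_mul_X_pow, Nat.zero_sub, Nat.cast_zero, mul_zero, map_zero,
    zero_mul, zero_add]
  refine sum_congr rfl fun p _ => ?_
  rw [div_mul_choose_mul_sub, map_mul, map_natCast, map_natCast,
    show p.1 + 1 - p.2 - 1 = p.1 - p.2 by omega]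
  push_cast
  ring

theorem pderiv_zero_A_add_two (n : ℕ) :
    pderiv 0 (A (n + 2)) = ((n : MvPolynomial (Fin 2) ℚ) + 2) * fibPoly (X 0) (X 1) (n + 1) := by
  rw [A_eq_sum_antidiagonal, map_sum,
    Nat.sum_antidiagonal_succ' (N := MvPolynomial (Fin 2) ℚ) (n := n + 1),
    Nat.sum_antidiagonal_succ (N := MvPolynomial (Fin 2) ℚ) (n := n),
    fibPoly_succ_eq_sum_antidiagonal, mul_sum]
  simp only [pderiv_zero_C_mul_X_pow_mul_X_pow, Nat.choose_zero_succ, Nat.cast_zero, mul_zero,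
    map_zero, zero_mul, zero_add]
  refine sum_congr rfl fun p _ => ?_
  rw [div_mul_choose_succ_mul_succ, map_mul, map_natCast, map_natCast, Nat.add_sub_cancel,
    Nat.add_sub_add_right]
  push_cast
  ring

theorem poisson_bracket_A_pred (n : ℕ) (hn : 3 ≤ n) :
    pderiv (0 : Fin 2) (A (n - 1)) * pderiv (1 : Fin 2) (A n)
      - pderiv (1 : Fin 2) (A (n - 1)) * pderiv (0 : Fin 2) (A n)
      = C ((n : ℚ) * ((n : ℚ) - 1) * (-1) ^ (n - 1)) * X 0 ^ (n - 2) := by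
  obtain ⟨m, rfl⟩ : ∃ m, n = m + 3 := ⟨n - 3, by omega⟩
  have h_cassini :=
    fibPoly_mul_fibPoly_add_two_sub_sq (X 0 : MvPolynomial (Fin 2) ℚ) (X 1) (m + 1)
  rw [show m + 3 - 1 = m + 2 by omega, show m + 3 - 2 = m + 1 by omega, pderiv_zero_A_add_two m,
    pderiv_one_A_succ (m + 2), pderiv_one_A_succ (m + 1), pderiv_zero_A_add_two (m + 1)]
  simp only [map_mul, map_sub, map_pow, map_neg, map_one, map_natCast]
  push_cast
  linear_combination ((m : MvPolynomial (Fin 2) ℚ) + 2) * (m + 3) * h_cassini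
end
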